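/- The function ϖ(ε) = λ(ε)/ν(ε) is a continuous, strictly decreasing bijection from the open interval (-1,1) onto the open interval (0,1). -/

import Mathlib

noncomputable def lam (ε : ℝ) : ℝ :=
  (1/4) * ∫ θ in (0:ℝ)..(2*Real.pi), Real.cos θ ^ 2 * (1 + ε * Real.cos (2*θ)) ^ (-(3:ℝ)/2)

noncomputable def mu (ε : ℝ) : ℝ :=
  (1/4) * ∫ θ in (0:ℝ)..(2*Real.pi), Real.sin θ ^ 2 * (1 + ε * Real.cos (2*θ)) ^ (-(3:ℝ)/2)

noncomputable def nu (ε : ℝ) : ℝ :=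
  (1/4) * ∫ θ in (0:ℝ)..(2*Real.pi), (1 + ε * Real.cos (2*θ)) ^ (-(3:ℝ)/2)


open Real intervalIntegral Set

noncomputable def kk (ε θ : ℝ) : ℝ := (1 + ε * Real.cos (2*θ)) ^ (-(3:ℝ)/2)

lemma base_pos {ε : ℝ} (hε : |ε| < 1) (θ : ℝ) : 0 < 1 + ε * Real.cos (2*θ) := by
  have h1 : |ε * Real.cos (2*θ)| ≤ |ε| := by
    rw [abs_mul]
    nlinarith [Real.abs_cos_le_one (2*θ), abs_nonneg ε]
  have h2 := (abs_le.1 h1).1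
  linarith

lemma kk_pos {ε : ℝ} (hε : |ε| < 1) (θ : ℝ) : 0 < kk ε θ :=
  Real.rpow_pos_of_pos (base_pos hε θ) _

lemma kk_cont {ε : ℝ} (hε : |ε| < 1) : Continuous (kk ε) := by
  apply Continuous.rpow_const
  · continuity
  · exact fun θ => Or.inl (base_pos hε θ).ne'

lemma kk_int {ε : ℝ} (hε : |ε| < 1) (a b : ℝ) : IntervalIntegrable (kk ε) MeasureTheory.volume a b :=
  (kk_cont hε).intervalIntegrable a b

lemma ckk_int {ε : ℝ} (hε : |ε| < 1) (a b : ℝ) :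
    IntervalIntegrable (fun θ => Real.cos θ ^ 2 * kk ε θ) MeasureTheory.volume a b :=
  (((Real.continuous_cos.pow 2)).mul (kk_cont hε)).intervalIntegrable a b

lemma skk_int {ε : ℝ} (hε : |ε| < 1) (a b : ℝ) :
    IntervalIntegrable (fun θ => Real.sin θ ^ 2 * kk ε θ) MeasureTheory.volume a b :=
  (((Real.continuous_sin.pow 2)).mul (kk_cont hε)).intervalIntegrable a b

/-- generic positivity of integral via strict positivity on a subinterval -/
lemma integral_pos_sub {f : ℝ → ℝ} (hf : Continuous f) (hnn : ∀ x, 0 ≤ f x)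
    {a b c d : ℝ} (hab : a ≤ b) (hbc : b < c) (hcd : c ≤ d)
    (hpos : ∀ x ∈ Ioo b c, 0 < f x) : 0 < ∫ x in a..d, f x := by
  have i1 : IntervalIntegrable f MeasureTheory.volume a b := hf.intervalIntegrable _ _
  have i2 : IntervalIntegrable f MeasureTheory.volume b c := hf.intervalIntegrable _ _
  have i3 : IntervalIntegrable f MeasureTheory.volume c d := hf.intervalIntegrable _ _
  have e1 : (∫ x in a..b, f x) + (∫ x in b..c, f x) = ∫ x in a..c, f x :=
    integral_add_adjacent_intervals i1 i2
  have e2 : (∫ x in a..c, f x) + (∫ x in c..d, f x) = ∫ x in a..d, f x :=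
    integral_add_adjacent_intervals (i1.trans i2) i3
  have p1 : 0 ≤ ∫ x in a..b, f x := integral_nonneg hab (fun u _ => hnn u)
  have p2 : 0 < ∫ x in b..c, f x := intervalIntegral_pos_of_pos_on i2 hpos hbc
  have p3 : 0 ≤ ∫ x in c..d, f x := integral_nonneg hcd (fun u _ => hnn u)
  linarith

lemma integral_nonpos' {f : ℝ → ℝ} {a b : ℝ} (hab : a ≤ b)
    (hf : IntervalIntegrable f MeasureTheory.volume a b) (h : ∀ x, f x ≤ 0) :
    (∫ x in a..b, f x) ≤ 0 := by
  have h2 : 0 ≤ ∫ x in a..b, -(f x) := integral_nonneg hab (fun u _ => neg_nonneg.2 (h u))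
  rw [intervalIntegral.integral_neg] at h2
  linarith


lemma lam_eq (ε : ℝ) : lam ε = (1/4) * ∫ θ in (0:ℝ)..(2*Real.pi), Real.cos θ ^ 2 * kk ε θ := rfl
lemma mu_eq' (ε : ℝ) : mu ε = (1/4) * ∫ θ in (0:ℝ)..(2*Real.pi), Real.sin θ ^ 2 * kk ε θ := rfl
lemma nu_eq (ε : ℝ) : nu ε = (1/4) * ∫ θ in (0:ℝ)..(2*Real.pi), kk ε θ := rfl

lemma lam_pos {ε : ℝ} (hε : |ε| < 1) : 0 < lam ε := by
  rw [lam_eq]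
  have h : 0 < ∫ θ in (0:ℝ)..(2*Real.pi), Real.cos θ ^ 2 * kk ε θ := by
    apply integral_pos_sub (((Real.continuous_cos.pow 2)).mul (kk_cont hε))
      (fun x => mul_nonneg (sq_nonneg _) (kk_pos hε x).le) (le_refl (0:ℝ))
      (by positivity : (0:ℝ) < Real.pi/4) (by nlinarith [Real.pi_pos] : Real.pi/4 ≤ 2*Real.pi)
    intro x hx
    have hc : 0 < Real.cos x := Real.cos_pos_of_mem_Ioo
      ⟨by nlinarith [Real.pi_pos, hx.1], by nlinarith [Real.pi_pos, hx.2]⟩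
    exact mul_pos (pow_pos hc 2) (kk_pos hε x)
  linarith

lemma mu_pos {ε : ℝ} (hε : |ε| < 1) : 0 < mu ε := by
  rw [mu_eq']
  have h : 0 < ∫ θ in (0:ℝ)..(2*Real.pi), Real.sin θ ^ 2 * kk ε θ := by
    apply integral_pos_sub (((Real.continuous_sin.pow 2)).mul (kk_cont hε))
      (fun x => mul_nonneg (sq_nonneg _) (kk_pos hε x).le)
      (by positivity : (0:ℝ) ≤ Real.pi/4) (by nlinarith [Real.pi_pos] : Real.pi/4 < Real.pi/2)
      (by nlinarith [Real.pi_pos] : Real.pi/2 ≤ 2*Real.pi)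
    intro x hx
    have hs : 0 < Real.sin x := Real.sin_pos_of_pos_of_lt_pi
      (by nlinarith [Real.pi_pos, hx.1]) (by nlinarith [Real.pi_pos, hx.2])
    exact mul_pos (pow_pos hs 2) (kk_pos hε x)
  linarith

lemma lam_add_mu {ε : ℝ} (hε : |ε| < 1) : lam ε + mu ε = nu ε := by
  rw [lam_eq, mu_eq', nu_eq, ← mul_add,
    ← intervalIntegral.integral_add (ckk_int hε 0 (2*Real.pi)) (skk_int hε 0 (2*Real.pi))]
  congr 1
  apply intervalIntegral.integral_congr
  intro x _
  simp only
  rw [← add_mul, add_comm, Real.sin_sq_add_cos_sq, one_mul]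

lemma nu_pos {ε : ℝ} (hε : |ε| < 1) : 0 < nu ε := by
  have := lam_pos hε; have := mu_pos hε; have := lam_add_mu hε; linarith

lemma lam_lt_nu {ε : ℝ} (hε : |ε| < 1) : lam ε < nu ε := by
  have := mu_pos hε; have := lam_add_mu hε; linarith


lemma cont_integral (c : ℝ → ℝ) (hc : Continuous c) (hb : ∀ θ, |c θ| ≤ 1) :
    ContinuousOn (fun ε => ∫ θ in (0:ℝ)..(2*Real.pi), c θ * kk ε θ) (Ioo (-1:ℝ) 1) := by
  intro ε₀ hε₀
  apply ContinuousAt.continuousWithinAt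
  have hε₀' : |ε₀| < 1 := abs_lt.2 ⟨hε₀.1, hε₀.2⟩
  set b : ℝ := (1 + |ε₀|)/2 with hbdef
  have hb1 : b < 1 := by rw [hbdef]; linarith
  have hb0 : |ε₀| < b := by rw [hbdef]; linarith
  have h1b : (0:ℝ) < 1 - b := by linarith
  apply intervalIntegral.continuousAt_of_dominated_interval
    (bound := fun _ => ((1:ℝ) - b) ^ (-(3:ℝ)/2))
  · apply Filter.Eventually.of_forall
    intro ε
    have hm : Measurable fun θ : ℝ => (1 + ε * Real.cos (2*θ)) ^ (-(3:ℝ)/2) := by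
      have h : Measurable fun θ : ℝ => 1 + ε * Real.cos (2*θ) := by fun_prop
      measurability
    exact (hc.measurable.mul hm).aestronglyMeasurable
  · filter_upwards [Metric.ball_mem_nhds ε₀ (by linarith : (0:ℝ) < b - |ε₀|)] with ε hball
    apply Filter.Eventually.of_forall
    intro θ _
    have hεb : |ε| < b := by
      have := abs_sub_abs_le_abs_sub ε ε₀
      have h2 : |ε - ε₀| < b - |ε₀| := by simpa [Real.dist_eq] using hball
      linarith
    have hbase : 1 - b ≤ 1 + ε * Real.cos (2*θ) := by
      have h1 : |ε * Real.cos (2*θ)| ≤ |ε| := by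
        rw [abs_mul]; nlinarith [Real.abs_cos_le_one (2*θ), abs_nonneg ε]
      have := (abs_le.1 h1).1
      linarith
    have hk : kk ε θ ≤ ((1:ℝ) - b) ^ (-(3:ℝ)/2) :=
      Real.rpow_le_rpow_of_nonpos h1b hbase (by norm_num)
    have hk0 : 0 < kk ε θ := Real.rpow_pos_of_pos (by linarith) _
    rw [Real.norm_eq_abs, abs_mul]
    calc |c θ| * |kk ε θ| ≤ 1 * |kk ε θ| :=
          mul_le_mul_of_nonneg_right (hb θ) (abs_nonneg _)
      _ = kk ε θ := by rw [one_mul, abs_of_pos hk0]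
      _ ≤ _ := hk
  · exact intervalIntegrable_const
  · apply Filter.Eventually.of_forall
    intro θ _
    apply ContinuousAt.mul continuousAt_const
    apply ContinuousAt.rpow_const
    · fun_prop
    · exact Or.inl (base_pos hε₀' θ).ne'


lemma lam_contOn : ContinuousOn lam (Ioo (-1:ℝ) 1) := by
  have h := cont_integral (fun θ => Real.cos θ ^ 2) (Real.continuous_cos.pow 2)
    (fun θ => by rw [abs_of_nonneg (sq_nonneg _)]; exact Real.cos_sq_le_one θ)
  exact continuousOn_const.mul h

lemma nu_contOn : ContinuousOn nu (Ioo (-1:ℝ) 1) := by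
  have h := cont_integral (fun _ => (1:ℝ)) continuous_const (fun θ => by norm_num)
  have he : (fun ε => ∫ θ in (0:ℝ)..(2*Real.pi), (fun _ => (1:ℝ)) θ * kk ε θ)
      = fun ε => ∫ θ in (0:ℝ)..(2*Real.pi), kk ε θ := by
    funext ε; simp
  rw [he] at h
  exact continuousOn_const.mul h

lemma f_contOn : ContinuousOn (fun ε => lam ε / nu ε) (Ioo (-1:ℝ) 1) :=
  lam_contOn.div nu_contOn (fun ε hε => (nu_pos (abs_lt.2 ⟨hε.1, hε.2⟩)).ne')


section Mono
variable {ε₁ ε₂ : ℝ} (h1 : |ε₁| < 1) (h2 : |ε₂| < 1) (h12 : ε₁ < ε₂)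

/-- key pointwise strict inequality -/
lemma key_lt (h1 : |ε₁| < 1) (h2 : |ε₂| < 1) (h12 : ε₁ < ε₂) {θ φ : ℝ}
    (hts : Real.cos (2*φ) < Real.cos (2*θ)) :
    kk ε₂ θ * kk ε₁ φ < kk ε₁ θ * kk ε₂ φ := by
  set t := Real.cos (2*θ)
  set s := Real.cos (2*φ)
  have p1t : 0 < 1 + ε₁ * t := base_pos h1 θ
  have p2t : 0 < 1 + ε₂ * t := base_pos h2 θ
  have p1s : 0 < 1 + ε₁ * s := base_pos h1 φ
  have p2s : 0 < 1 + ε₂ * s := base_pos h2 φ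
  have hprod : (1 + ε₁ * t) * (1 + ε₂ * s) < (1 + ε₂ * t) * (1 + ε₁ * s) := by nlinarith
  have hmul : kk ε₂ θ * kk ε₁ φ = ((1 + ε₂ * t) * (1 + ε₁ * s)) ^ (-(3:ℝ)/2) := by
    rw [Real.mul_rpow p2t.le p1s.le]; rfl
  have hmul' : kk ε₁ θ * kk ε₂ φ = ((1 + ε₁ * t) * (1 + ε₂ * s)) ^ (-(3:ℝ)/2) := by
    rw [Real.mul_rpow p1t.le p2s.le]; rfl
  rw [hmul, hmul']
  exact Real.rpow_lt_rpow_of_neg (by positivity) hprod (by norm_num)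

/-- the symmetrized integrand -/
noncomputable def G (ε₁ ε₂ θ φ : ℝ) : ℝ :=
  (Real.cos θ ^ 2 - Real.cos φ ^ 2) * (kk ε₂ θ * kk ε₁ φ - kk ε₁ θ * kk ε₂ φ)

lemma cos_sq_diff (θ φ : ℝ) :
    Real.cos θ ^ 2 - Real.cos φ ^ 2 = (Real.cos (2*θ) - Real.cos (2*φ)) / 2 := by
  rw [Real.cos_sq θ, Real.cos_sq φ]; ring

lemma G_nonpos (h1 : |ε₁| < 1) (h2 : |ε₂| < 1) (h12 : ε₁ < ε₂) (θ φ : ℝ) :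
    G ε₁ ε₂ θ φ ≤ 0 := by
  unfold G
  rcases lt_trichotomy (Real.cos (2*φ)) (Real.cos (2*θ)) with h | h | h
  · have hk := key_lt h1 h2 h12 (θ := θ) (φ := φ) h
    have hc : 0 < Real.cos θ ^ 2 - Real.cos φ ^ 2 := by rw [cos_sq_diff]; linarith
    nlinarith
  · have hc : Real.cos θ ^ 2 - Real.cos φ ^ 2 = 0 := by rw [cos_sq_diff, h]; ring
    rw [hc, zero_mul]
  · have hk := key_lt h1 h2 h12 (θ := φ) (φ := θ) h
    have hc : Real.cos θ ^ 2 - Real.cos φ ^ 2 < 0 := by rw [cos_sq_diff]; linarith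
    nlinarith

lemma G_neg (h1 : |ε₁| < 1) (h2 : |ε₂| < 1) (h12 : ε₁ < ε₂) {θ φ : ℝ}
    (hθ : θ ∈ Ioo 0 (Real.pi/4)) (hφ : φ ∈ Ioo (Real.pi/4) (Real.pi/2)) :
    G ε₁ ε₂ θ φ < 0 := by
  have htpos : 0 < Real.cos (2*θ) := Real.cos_pos_of_mem_Ioo
    ⟨by nlinarith [Real.pi_pos, hθ.1], by nlinarith [Real.pi_pos, hθ.2]⟩
  have hsneg : Real.cos (2*φ) < 0 := by
    have h2φ : Real.pi/2 < 2*φ := by nlinarith [hφ.1]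
    have h2φ' : 2*φ < Real.pi + Real.pi/2 := by nlinarith [hφ.2, Real.pi_pos]
    exact Real.cos_neg_of_pi_div_two_lt_of_lt h2φ h2φ'
  have h : Real.cos (2*φ) < Real.cos (2*θ) := lt_trans hsneg htpos
  have hk := key_lt h1 h2 h12 (θ := θ) (φ := φ) h
  have hc : 0 < Real.cos θ ^ 2 - Real.cos φ ^ 2 := by rw [cos_sq_diff]; linarith
  unfold G
  nlinarith

end Mono

section Mono2
variable {ε₁ ε₂ : ℝ}

lemma G_cont (h1 : |ε₁| < 1) (h2 : |ε₂| < 1) (θ : ℝ) : Continuous (G ε₁ ε₂ θ) := by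
  unfold G
  exact (continuous_const.sub (Real.continuous_cos.pow 2)).mul
    ((continuous_const.mul (kk_cont h1)).sub (continuous_const.mul (kk_cont h2)))

lemma inner_eq (h1 : |ε₁| < 1) (h2 : |ε₂| < 1) (θ : ℝ) :
    ∫ φ in (0:ℝ)..(2*Real.pi), G ε₁ ε₂ θ φ
      = (Real.cos θ ^ 2 * kk ε₂ θ) * (∫ φ in (0:ℝ)..(2*Real.pi), kk ε₁ φ)
        - (Real.cos θ ^ 2 * kk ε₁ θ) * (∫ φ in (0:ℝ)..(2*Real.pi), kk ε₂ φ)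
        - kk ε₂ θ * (∫ φ in (0:ℝ)..(2*Real.pi), Real.cos φ ^ 2 * kk ε₁ φ)
        + kk ε₁ θ * (∫ φ in (0:ℝ)..(2*Real.pi), Real.cos φ ^ 2 * kk ε₂ φ) := by
  have e : ∀ φ, G ε₁ ε₂ θ φ
      = (Real.cos θ ^ 2 * kk ε₂ θ) * kk ε₁ φ
        - ((Real.cos θ ^ 2 * kk ε₁ θ) * kk ε₂ φ
          + (kk ε₂ θ * (Real.cos φ ^ 2 * kk ε₁ φ) - kk ε₁ θ * (Real.cos φ ^ 2 * kk ε₂ φ))) := by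
    intro φ; unfold G; ring
  have I1 := (kk_int h1 0 (2*Real.pi)).const_mul (Real.cos θ ^ 2 * kk ε₂ θ)
  have I2 := (kk_int h2 0 (2*Real.pi)).const_mul (Real.cos θ ^ 2 * kk ε₁ θ)
  have I3 := (ckk_int h1 0 (2*Real.pi)).const_mul (kk ε₂ θ)
  have I4 := (ckk_int h2 0 (2*Real.pi)).const_mul (kk ε₁ θ)
  rw [intervalIntegral.integral_congr (fun φ _ => e φ),
    intervalIntegral.integral_sub I1 (I2.add (I3.sub I4)),
    intervalIntegral.integral_add I2 (I3.sub I4),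
    intervalIntegral.integral_sub I3 I4,
    intervalIntegral.integral_const_mul, intervalIntegral.integral_const_mul,
    intervalIntegral.integral_const_mul, intervalIntegral.integral_const_mul]
  ring

lemma mono_key (h1 : |ε₁| < 1) (h2 : |ε₂| < 1) (h12 : ε₁ < ε₂) :
    (∫ θ in (0:ℝ)..(2*Real.pi), Real.cos θ ^ 2 * kk ε₂ θ) * (∫ θ in (0:ℝ)..(2*Real.pi), kk ε₁ θ)
      < (∫ θ in (0:ℝ)..(2*Real.pi), Real.cos θ ^ 2 * kk ε₁ θ)
        * (∫ θ in (0:ℝ)..(2*Real.pi), kk ε₂ θ) := by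
  set K1 := ∫ θ in (0:ℝ)..(2*Real.pi), kk ε₁ θ with hK1
  set K2 := ∫ θ in (0:ℝ)..(2*Real.pi), kk ε₂ θ with hK2
  set A1 := ∫ θ in (0:ℝ)..(2*Real.pi), Real.cos θ ^ 2 * kk ε₁ θ with hA1
  set A2 := ∫ θ in (0:ℝ)..(2*Real.pi), Real.cos θ ^ 2 * kk ε₂ θ with hA2
  set H : ℝ → ℝ := fun θ =>
    (Real.cos θ ^ 2 * kk ε₂ θ) * K1 - (Real.cos θ ^ 2 * kk ε₁ θ) * K2
      - kk ε₂ θ * A1 + kk ε₁ θ * A2 with hHdef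
  have hpi : (0:ℝ) < Real.pi := Real.pi_pos
  have hHg : ∀ θ, H θ = ∫ φ in (0:ℝ)..(2*Real.pi), G ε₁ ε₂ θ φ := by
    intro θ; rw [inner_eq h1 h2 θ]
  have hHle : ∀ θ, H θ ≤ 0 := by
    intro θ
    rw [hHg θ]
    exact integral_nonpos' (by linarith) ((G_cont h1 h2 θ).intervalIntegrable _ _)
      (G_nonpos h1 h2 h12 θ)
  have hHlt : ∀ θ ∈ Ioo (0:ℝ) (Real.pi/4), H θ < 0 := by
    intro θ hθ
    rw [hHg θ]
    have i1 : IntervalIntegrable (G ε₁ ε₂ θ) MeasureTheory.volume 0 (Real.pi/4) :=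
      (G_cont h1 h2 θ).intervalIntegrable _ _
    have i2 : IntervalIntegrable (G ε₁ ε₂ θ) MeasureTheory.volume (Real.pi/4) (Real.pi/2) :=
      (G_cont h1 h2 θ).intervalIntegrable _ _
    have i3 : IntervalIntegrable (G ε₁ ε₂ θ) MeasureTheory.volume (Real.pi/2) (2*Real.pi) :=
      (G_cont h1 h2 θ).intervalIntegrable _ _
    have e1 : (∫ φ in (0:ℝ)..(Real.pi/4), G ε₁ ε₂ θ φ)
        + (∫ φ in (Real.pi/4)..(Real.pi/2), G ε₁ ε₂ θ φ)
        = ∫ φ in (0:ℝ)..(Real.pi/2), G ε₁ ε₂ θ φ := integral_add_adjacent_intervals i1 i2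
    have e2 : (∫ φ in (0:ℝ)..(Real.pi/2), G ε₁ ε₂ θ φ)
        + (∫ φ in (Real.pi/2)..(2*Real.pi), G ε₁ ε₂ θ φ)
        = ∫ φ in (0:ℝ)..(2*Real.pi), G ε₁ ε₂ θ φ :=
      integral_add_adjacent_intervals (i1.trans i2) i3
    have p1 : (∫ φ in (0:ℝ)..(Real.pi/4), G ε₁ ε₂ θ φ) ≤ 0 :=
      integral_nonpos' (by linarith) i1 (G_nonpos h1 h2 h12 θ)
    have p3 : (∫ φ in (Real.pi/2)..(2*Real.pi), G ε₁ ε₂ θ φ) ≤ 0 :=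
      integral_nonpos' (by linarith) i3 (G_nonpos h1 h2 h12 θ)
    have p2 : (∫ φ in (Real.pi/4)..(Real.pi/2), G ε₁ ε₂ θ φ) < 0 := by
      have hpos : 0 < ∫ φ in (Real.pi/4)..(Real.pi/2), -(G ε₁ ε₂ θ φ) := by
        apply intervalIntegral_pos_of_pos_on ((G_cont h1 h2 θ).neg.intervalIntegrable _ _)
        · intro φ hφ
          exact neg_pos.2 (G_neg h1 h2 h12 hθ hφ)
        · linarith
      rw [intervalIntegral.integral_neg] at hpos
      linarith
    linarith
  have hHcont : Continuous H := by
    apply Continuous.add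
    apply Continuous.sub
    apply Continuous.sub
    · exact ((Real.continuous_cos.pow 2).mul (kk_cont h2)).mul continuous_const
    · exact ((Real.continuous_cos.pow 2).mul (kk_cont h1)).mul continuous_const
    · exact (kk_cont h2).mul continuous_const
    · exact (kk_cont h1).mul continuous_const
  have hint : (∫ θ in (0:ℝ)..(2*Real.pi), H θ) < 0 := by
    have i1 : IntervalIntegrable H MeasureTheory.volume 0 (Real.pi/4) :=
      hHcont.intervalIntegrable _ _
    have i2 : IntervalIntegrable H MeasureTheory.volume (Real.pi/4) (2*Real.pi) :=
      hHcont.intervalIntegrable _ _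
    have e1 : (∫ θ in (0:ℝ)..(Real.pi/4), H θ) + (∫ θ in (Real.pi/4)..(2*Real.pi), H θ)
        = ∫ θ in (0:ℝ)..(2*Real.pi), H θ := integral_add_adjacent_intervals i1 i2
    have p2 : (∫ θ in (Real.pi/4)..(2*Real.pi), H θ) ≤ 0 :=
      integral_nonpos' (by linarith) i2 hHle
    have p1 : (∫ θ in (0:ℝ)..(Real.pi/4), H θ) < 0 := by
      have hpos : 0 < ∫ θ in (0:ℝ)..(Real.pi/4), -(H θ) := by
        apply intervalIntegral_pos_of_pos_on (hHcont.neg.intervalIntegrable _ _)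
        · intro θ hθ
          exact neg_pos.2 (hHlt θ hθ)
        · linarith
      rw [intervalIntegral.integral_neg] at hpos
      linarith
    linarith
  have hval : (∫ θ in (0:ℝ)..(2*Real.pi), H θ) = 2 * (A2 * K1) - 2 * (A1 * K2) := by
    have e : ∀ θ, H θ = (Real.cos θ ^ 2 * kk ε₂ θ) * K1
        - ((Real.cos θ ^ 2 * kk ε₁ θ) * K2 + (kk ε₂ θ * A1 - kk ε₁ θ * A2)) := by
      intro θ; rw [hHdef]; ring
    have I1 := (ckk_int h2 0 (2*Real.pi)).mul_const K1
    have I2 := (ckk_int h1 0 (2*Real.pi)).mul_const K2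
    have I3 := (kk_int h2 0 (2*Real.pi)).mul_const A1
    have I4 := (kk_int h1 0 (2*Real.pi)).mul_const A2
    rw [intervalIntegral.integral_congr (fun θ _ => e θ),
      intervalIntegral.integral_sub I1 (I2.add (I3.sub I4)),
      intervalIntegral.integral_add I2 (I3.sub I4),
      intervalIntegral.integral_sub I3 I4,
      intervalIntegral.integral_mul_const, intervalIntegral.integral_mul_const,
      intervalIntegral.integral_mul_const, intervalIntegral.integral_mul_const]
    ring
  rw [hval] at hint
  linarith

end Mono2


lemma shift_int (g : ℝ → ℝ) (hper : Function.Periodic g (2*Real.pi)) :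
    (∫ θ in (0:ℝ)..(2*Real.pi), g (θ + Real.pi/2)) = ∫ θ in (0:ℝ)..(2*Real.pi), g θ := by
  rw [intervalIntegral.integral_comp_add_right g (Real.pi/2)]
  have h := hper.intervalIntegral_add_eq (Real.pi/2) 0
  rw [show (0:ℝ) + Real.pi/2 = Real.pi/2 by ring,
    show 2*Real.pi + Real.pi/2 = Real.pi/2 + 2*Real.pi by ring]
  simpa using h

lemma per_aux (c : ℝ → ℝ) (hc : Function.Periodic c (2*Real.pi)) (ε : ℝ) :
    Function.Periodic (fun θ => c θ * (1 + ε * Real.cos (2*θ)) ^ (-(3:ℝ)/2)) (2*Real.pi) := by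
  intro x
  simp only
  rw [hc x, show 2*(x+2*Real.pi) = (2*x + 2*Real.pi) + 2*Real.pi by ring,
    Real.cos_add_two_pi, Real.cos_add_two_pi]

lemma mu_symm (ε : ℝ) : mu ε = lam (-ε) := by
  have hper : Function.Periodic
      (fun θ => Real.cos θ ^ 2 * (1 + (-ε) * Real.cos (2*θ)) ^ (-(3:ℝ)/2)) (2*Real.pi) :=
    per_aux _ (fun x => by rw [Real.cos_add_two_pi]) (-ε)
  have key : ∀ θ : ℝ, Real.cos (θ + Real.pi/2) ^ 2
        * (1 + (-ε) * Real.cos (2*(θ + Real.pi/2))) ^ (-(3:ℝ)/2)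
      = Real.sin θ ^ 2 * (1 + ε * Real.cos (2*θ)) ^ (-(3:ℝ)/2) := by
    intro θ
    rw [Real.cos_add_pi_div_two, show 2*(θ + Real.pi/2) = 2*θ + Real.pi by ring,
      Real.cos_add_pi, neg_sq]
    ring_nf
  have h := shift_int _ hper
  unfold mu lam
  congr 1
  rw [← h]
  apply intervalIntegral.integral_congr
  intro θ _
  exact (key θ).symm

lemma nu_symm (ε : ℝ) : nu (-ε) = nu ε := by
  have hper : Function.Periodic
      (fun θ => (1:ℝ) * (1 + (-ε) * Real.cos (2*θ)) ^ (-(3:ℝ)/2)) (2*Real.pi) :=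
    per_aux (fun _ => (1:ℝ)) (fun x => rfl) (-ε)
  have h := shift_int _ hper
  have key : ∀ θ : ℝ, (1:ℝ) * (1 + (-ε) * Real.cos (2*(θ + Real.pi/2))) ^ (-(3:ℝ)/2)
      = (1 + ε * Real.cos (2*θ)) ^ (-(3:ℝ)/2) := by
    intro θ
    rw [show 2*(θ + Real.pi/2) = 2*θ + Real.pi by ring, Real.cos_add_pi]
    ring_nf
  unfold nu
  congr 1
  calc (∫ θ in (0:ℝ)..(2*Real.pi), (1 + (-ε) * Real.cos (2*θ)) ^ (-(3:ℝ)/2))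
      = ∫ θ in (0:ℝ)..(2*Real.pi), (1:ℝ) * (1 + (-ε) * Real.cos (2*θ)) ^ (-(3:ℝ)/2) := by
        apply intervalIntegral.integral_congr; intro θ _; simp
    _ = ∫ θ in (0:ℝ)..(2*Real.pi), (1:ℝ) * (1 + (-ε) * Real.cos (2*(θ + Real.pi/2))) ^ (-(3:ℝ)/2) := h.symm
    _ = ∫ θ in (0:ℝ)..(2*Real.pi), (1 + ε * Real.cos (2*θ)) ^ (-(3:ℝ)/2) := by
        apply intervalIntegral.integral_congr; intro θ _; simpa using key θ

lemma nu_lower {a : ℝ} (ha : 0 < a) (ha' : a ≤ 1/12) :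
    1/(6*a) ≤ nu (1 - a^2) := by
  set ε := 1 - a^2 with hεdef
  have hε : |ε| < 1 := by
    rw [abs_lt]; constructor <;> nlinarith
  have hε0 : (0:ℝ) < ε := by nlinarith
  have hpi : (0:ℝ) < Real.pi := Real.pi_pos
  have hpi3 : (3:ℝ) < Real.pi := Real.pi_gt_three
  have hwin : ∀ θ ∈ Icc (Real.pi/2 - a) (Real.pi/2 + a), (3*a^2)⁻¹ ≤ kk ε θ := by
    intro θ hθ
    have hcos : Real.cos (2*θ) ≤ -1 + 2*a^2 := by
      have h1 := Real.one_sub_sq_div_two_le_cos (x := 2*θ - Real.pi)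
      rw [Real.cos_sub_pi] at h1
      have h2 : (2*θ - Real.pi)^2 ≤ 4*a^2 := by
        have := hθ.1; have := hθ.2; nlinarith
      nlinarith
    have hbase : 1 + ε * Real.cos (2*θ) ≤ 3*a^2 := by
      have h3 : ε * Real.cos (2*θ) ≤ ε * (-1 + 2*a^2) :=
        mul_le_mul_of_nonneg_left hcos hε0.le
      nlinarith
    have h3a : (0:ℝ) < 3*a^2 := by positivity
    have hr1 : (3*a^2) ^ (-(3:ℝ)/2) ≤ kk ε θ :=
      Real.rpow_le_rpow_of_nonpos (base_pos hε θ) hbase (by norm_num)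
    have hr2 : (3*a^2)⁻¹ ≤ (3*a^2) ^ (-(3:ℝ)/2) := by
      rw [← Real.rpow_neg_one]
      exact Real.rpow_le_rpow_of_exponent_ge h3a (by nlinarith) (by norm_num)
    linarith
  have hab : Real.pi/2 - a ≤ Real.pi/2 + a := by linarith
  have hlow : 2*a * (3*a^2)⁻¹ ≤ ∫ θ in (Real.pi/2 - a)..(Real.pi/2 + a), kk ε θ := by
    have h := intervalIntegral.integral_mono_on hab intervalIntegrable_const
      (kk_int hε _ _) hwin
    rw [intervalIntegral.integral_const] at h
    have : (Real.pi/2 + a - (Real.pi/2 - a)) • (3*a^2)⁻¹ = 2*a * (3*a^2)⁻¹ := by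
      rw [smul_eq_mul]; ring
    linarith [this ▸ h]
  have hsplit : (∫ θ in (Real.pi/2 - a)..(Real.pi/2 + a), kk ε θ)
      ≤ ∫ θ in (0:ℝ)..(2*Real.pi), kk ε θ := by
    have i1 : IntervalIntegrable (kk ε) MeasureTheory.volume 0 (Real.pi/2 - a) := kk_int hε _ _
    have i2 : IntervalIntegrable (kk ε) MeasureTheory.volume (Real.pi/2 - a) (Real.pi/2 + a) :=
      kk_int hε _ _
    have i3 : IntervalIntegrable (kk ε) MeasureTheory.volume (Real.pi/2 + a) (2*Real.pi) :=
      kk_int hε _ _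
    have e1 := integral_add_adjacent_intervals i1 i2
    have e2 := integral_add_adjacent_intervals (i1.trans i2) i3
    have p1 : 0 ≤ ∫ θ in (0:ℝ)..(Real.pi/2 - a), kk ε θ :=
      intervalIntegral.integral_nonneg (by linarith) (fun u _ => (kk_pos hε u).le)
    have p3 : 0 ≤ ∫ θ in (Real.pi/2 + a)..(2*Real.pi), kk ε θ :=
      intervalIntegral.integral_nonneg (by linarith) (fun u _ => (kk_pos hε u).le)
    linarith
  have hfin : 1/(6*a) = (1/4) * (2*a * (3*a^2)⁻¹) := by
    field_simp; ring
  rw [nu_eq, hfin]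
  nlinarith [hlow, hsplit]

lemma nu_large (M : ℝ) : ∃ ε : ℝ, |ε| < 1 ∧ 1/2 ≤ ε ∧ M < nu ε := by
  set M' : ℝ := max M 1 + 1 with hM'
  have hM1 : (1:ℝ) ≤ max M 1 := le_max_right _ _
  have hMM : M < M' := lt_of_le_of_lt (le_max_left M 1) (by linarith)
  set a : ℝ := 1/(6*M') with hadef
  have hM'2 : (2:ℝ) ≤ M' := by linarith
  have ha : 0 < a := by rw [hadef]; positivity
  have ha' : a ≤ 1/12 := by
    rw [hadef, div_le_div_iff₀ (by linarith) (by norm_num)]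
    linarith
  have h := nu_lower ha ha'
  have heq : 1/(6*a) = M' := by rw [hadef]; field_simp
  refine ⟨1 - a^2, ?_, ?_, ?_⟩
  · rw [abs_lt]; constructor <;> nlinarith
  · nlinarith
  · rw [heq] at h; linarith

lemma lam_bound {δ ε : ℝ} (hδ0 : 0 < δ) (hδ1 : δ < 1) (hε1 : 1/2 ≤ ε) (hε2 : ε < 1) :
    lam ε ≤ δ * nu ε + (Real.pi/2) * δ ^ (-(3:ℝ)/2) := by
  have hε : |ε| < 1 := by rw [abs_lt]; constructor <;> linarith
  have hpi : (0:ℝ) < Real.pi := Real.pi_pos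
  have hδp : (0:ℝ) < δ ^ (-(3:ℝ)/2) := Real.rpow_pos_of_pos hδ0 _
  have hpt : ∀ θ, Real.cos θ ^ 2 * kk ε θ ≤ δ * kk ε θ + δ ^ (-(3:ℝ)/2) := by
    intro θ
    by_cases hc : Real.cos θ ^ 2 ≤ δ
    · have := mul_le_mul_of_nonneg_right hc (kk_pos hε θ).le
      linarith
    · push_neg at hc
      have hbase : δ ≤ 1 + ε * Real.cos (2*θ) := by
        rw [Real.cos_two_mul]
        nlinarith
      have hk : kk ε θ ≤ δ ^ (-(3:ℝ)/2) :=
        Real.rpow_le_rpow_of_nonpos hδ0 hbase (by norm_num)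
      have hc1 : Real.cos θ ^ 2 ≤ 1 := Real.cos_sq_le_one θ
      have := mul_le_mul_of_nonneg_right hc1 (kk_pos hε θ).le
      have hδk : 0 ≤ δ * kk ε θ := mul_nonneg hδ0.le (kk_pos hε θ).le
      linarith
  have hmono : (∫ θ in (0:ℝ)..(2*Real.pi), Real.cos θ ^ 2 * kk ε θ)
      ≤ ∫ θ in (0:ℝ)..(2*Real.pi), (δ * kk ε θ + δ ^ (-(3:ℝ)/2)) := by
    apply intervalIntegral.integral_mono_on (by linarith) (ckk_int hε _ _)
      (((kk_int hε 0 (2*Real.pi)).const_mul δ).add intervalIntegrable_const)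
    intro θ _; exact hpt θ
  have hval : (∫ θ in (0:ℝ)..(2*Real.pi), (δ * kk ε θ + δ ^ (-(3:ℝ)/2)))
      = δ * (∫ θ in (0:ℝ)..(2*Real.pi), kk ε θ) + 2*Real.pi * δ ^ (-(3:ℝ)/2) := by
    rw [intervalIntegral.integral_add ((kk_int hε 0 (2*Real.pi)).const_mul δ)
      intervalIntegrable_const, intervalIntegral.integral_const_mul,
      intervalIntegral.integral_const]
    rw [smul_eq_mul]; ring
  rw [lam_eq, nu_eq]
  rw [hval] at hmono
  linarith


lemma mem_abs {ε : ℝ} (h : ε ∈ Ioo (-1:ℝ) 1) : |ε| < 1 := abs_lt.2 ⟨h.1, h.2⟩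

lemma f_anti : StrictAntiOn (fun ε => lam ε / nu ε) (Ioo (-1:ℝ) 1) := by
  intro a ha b hb hab
  have ha' := mem_abs ha
  have hb' := mem_abs hb
  simp only
  rw [div_lt_div_iff₀ (nu_pos hb') (nu_pos ha')]
  have h := mono_key ha' hb' hab
  rw [lam_eq, lam_eq, nu_eq, nu_eq]
  nlinarith

lemma exists_small {y : ℝ} (hy0 : 0 < y) (hy1 : y < 1) :
    ∃ ε ∈ Ioo (-1:ℝ) 1, lam ε / nu ε < y := by
  set δ : ℝ := y/2 with hδdef
  have hδ0 : 0 < δ := by linarith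
  have hδ1 : δ < 1 := by linarith
  set C : ℝ := (Real.pi/2) * δ ^ (-(3:ℝ)/2) with hCdef
  have hC0 : 0 < C := by
    have := Real.rpow_pos_of_pos hδ0 (-(3:ℝ)/2)
    have := Real.pi_pos
    positivity
  obtain ⟨ε, hε, hhalf, hM⟩ := nu_large (C/δ)
  have hεI : ε ∈ Ioo (-1:ℝ) 1 := ⟨(abs_lt.1 hε).1, (abs_lt.1 hε).2⟩
  have hnu := nu_pos hε
  have hlb := lam_bound hδ0 hδ1 hhalf hεI.2
  have hCδ : C < nu ε * δ := (div_lt_iff₀ hδ0).1 hM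
  refine ⟨ε, hεI, ?_⟩
  rw [div_lt_iff₀ hnu]
  calc lam ε ≤ δ * nu ε + C := hlb
    _ < δ * nu ε + nu ε * δ := by linarith
    _ = y * nu ε := by rw [hδdef]; ring

lemma f_neg (ε : ℝ) (hε : |ε| < 1) : lam (-ε) / nu (-ε) = 1 - lam ε / nu ε := by
  rw [nu_symm, ← mu_symm]
  have h := lam_add_mu hε
  have hnu := nu_pos hε
  field_simp
  linarith

lemma exists_large {y : ℝ} (hy0 : 0 < y) (hy1 : y < 1) :
    ∃ ε ∈ Ioo (-1:ℝ) 1, y < lam ε / nu ε := by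
  obtain ⟨ε, hεI, hsmall⟩ := exists_small (y := 1 - y) (by linarith) (by linarith)
  have hε := mem_abs hεI
  refine ⟨-ε, ⟨by linarith [hεI.2], by linarith [hεI.1]⟩, ?_⟩
  rw [f_neg ε hε]
  linarith



theorem stmt_15 :
    ContinuousOn (fun ε => lam ε / nu ε) (Set.Ioo (-1:ℝ) 1) ∧
    StrictAntiOn (fun ε => lam ε / nu ε) (Set.Ioo (-1:ℝ) 1) ∧
    Set.BijOn (fun ε => lam ε / nu ε) (Set.Ioo (-1:ℝ) 1) (Set.Ioo (0:ℝ) 1) := by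
  refine ⟨f_contOn, f_anti, ?_, f_anti.injOn, ?_⟩
  · intro ε hε
    have hε' := mem_abs hε
    exact ⟨div_pos (lam_pos hε') (nu_pos hε'), (div_lt_one (nu_pos hε')).2 (lam_lt_nu hε')⟩
  · intro y hy
    obtain ⟨εb, hεbI, hb⟩ := exists_small hy.1 hy.2
    obtain ⟨εa, hεaI, ha⟩ := exists_large hy.1 hy.2
    have hsub : uIcc εa εb ⊆ Ioo (-1:ℝ) 1 := by
      intro x hx
      rw [Set.mem_uIcc] at hx
      rcases hx with ⟨h1, h2⟩ | ⟨h1, h2⟩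
      · exact ⟨lt_of_lt_of_le hεaI.1 h1, lt_of_le_of_lt h2 hεbI.2⟩
      · exact ⟨lt_of_lt_of_le hεbI.1 h1, lt_of_le_of_lt h2 hεaI.2⟩
    have hcont : ContinuousOn (fun ε => lam ε / nu ε) (uIcc εa εb) := f_contOn.mono hsub
    have hy' : y ∈ uIcc (lam εa / nu εa) (lam εb / nu εb) :=
      Set.mem_uIcc.2 (Or.inr ⟨hb.le, ha.le⟩)
    obtain ⟨x, hx, hfx⟩ := intermediate_value_uIcc hcont hy'
    exact ⟨x, hsub hx, hfx⟩
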